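/- Let A ∈ ℝ_max^{n×n} be such that 𝒢(A) contains no circuit of positive weight. Then the Kleene star stabilizes as a finite sum: for every m ≥ n−1, I_n ⊕ A ⊕ A^{⊗2} ⊕ ⋯ ⊕ A^{⊗m} = I_n ⊕ A ⊕ ⋯ ⊕ A^{⊗(n−1)} =: A*, and the (i,j) entry of A* equals the maximum weight over all i-j paths in 𝒢(A) (of any length, including the empty path of weight 0 when i = j). -/

import Mathlib

open BigOperators

/-- The max-plus semiring `ℝ_max = ℝ ∪ {ε}`, `ε = -∞`, realized as `WithBot ℝ`.
Here `⊔` (i.e. `max`) is the max-plus addition `⊕` and `+` is the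
max-plus multiplication `⊗` (with `⊥ + x = ⊥`). -/
abbrev Rmax : Type := WithBot ℝ

namespace MaxPlus

noncomputable section

/-- Max-plus matrix product `A ⊗ B`. -/
def mul {l m k : ℕ} (A : Matrix (Fin l) (Fin m) Rmax) (B : Matrix (Fin m) (Fin k) Rmax) :
    Matrix (Fin l) (Fin k) Rmax :=
  fun i j => Finset.univ.sup fun s => A i s + B s j

/-- Max-plus identity matrix `I_n` (`0` on the diagonal, `ε` off the diagonal). -/
def one (n : ℕ) : Matrix (Fin n) (Fin n) Rmax :=
  fun i j => if i = j then (0 : Rmax) else ⊥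

/-- Max-plus matrix power `A^{⊗t}`. -/
def pow {n : ℕ} (A : Matrix (Fin n) (Fin n) Rmax) : ℕ → Matrix (Fin n) (Fin n) Rmax
  | 0 => one n
  | t + 1 => mul (pow A t) A

variable {n : ℕ}

/-- `p` is a walk (path) of length `t` in the digraph `𝒢(A)`:
consecutive nodes are joined by arcs (finite entries of `A`). -/
def IsWalk (A : Matrix (Fin n) (Fin n) Rmax) (t : ℕ) (p : ℕ → Fin n) : Prop :=
  ∀ k, k < t → A (p k) (p (k + 1)) ≠ ⊥

/-- The weight of a walk: the sum of its arc weights. -/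
def weight (A : Matrix (Fin n) (Fin n) Rmax) (t : ℕ) (p : ℕ → Fin n) : Rmax :=
  ∑ k ∈ Finset.range t, A (p k) (p (k + 1))

/-- `p` is a circuit of length `t` in `𝒢(A)`. -/
def IsCircuit (A : Matrix (Fin n) (Fin n) Rmax) (t : ℕ) (p : ℕ → Fin n) : Prop :=
  0 < t ∧ IsWalk A t p ∧ p t = p 0

/-- Elementary circuit: no repeated node among `p 0, …, p (t-1)`. -/
def IsElemCircuit (A : Matrix (Fin n) (Fin n) Rmax) (t : ℕ) (p : ℕ → Fin n) : Prop :=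
  IsCircuit A t p ∧ ∀ k, k < t → ∀ l, l < t → p k = p l → k = l

/-- Mean weight `w(𝒞)/ℓ(𝒞)` of a circuit, as a real number
(the weight of a genuine circuit is never `⊥`). -/
def mean (A : Matrix (Fin n) (Fin n) Rmax) (t : ℕ) (p : ℕ → Fin n) : ℝ :=
  WithBot.unbotD 0 (weight A t p) / (t : ℝ)

/-- `x` is an eigenvector of `A` for the eigenvalue `lam`:
`x` is not identically `ε` and `A ⊗ x = lam ⊗ x`. -/
def IsEigenpair (A : Matrix (Fin n) (Fin n) Rmax) (lam : Rmax) (x : Fin n → Rmax) : Prop :=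
  (∃ i, x i ≠ ⊥) ∧ ∀ i, (Finset.univ.sup fun k => A i k + x k) = lam + x i

/-- `lam` is an eigenvalue of `A`. -/
def IsEigenvalue (A : Matrix (Fin n) (Fin n) Rmax) (lam : Rmax) : Prop :=
  ∃ x, IsEigenpair A lam x

/-- `μ = λ(A)`: the maximum mean weight over all circuits of `𝒢(A)`. -/
def IsMaxCircuitMean (A : Matrix (Fin n) (Fin n) Rmax) (μ : ℝ) : Prop :=
  (∃ t p, IsCircuit A t p ∧ mean A t p = μ) ∧ ∀ t p, IsCircuit A t p → mean A t p ≤ μ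

/-- Kleene star `A* = I_n ⊕ A ⊕ A^{⊗2} ⊕ ⋯ ⊕ A^{⊗(n-1)}`. -/
def star (A : Matrix (Fin n) (Fin n) Rmax) : Matrix (Fin n) (Fin n) Rmax :=
  fun i j => (Finset.range n).sup fun k => pow A k i j

/-- Partial sum `I_n ⊕ A ⊕ ⋯ ⊕ A^{⊗m}` of the Kleene star. -/
def starUpTo (A : Matrix (Fin n) (Fin n) Rmax) (m : ℕ) : Matrix (Fin n) (Fin n) Rmax :=
  fun i j => (Finset.range (m + 1)).sup fun k => pow A k i j

/-- Max-plus determinant `det A = ⊕_{π ∈ S_n} ⊗_i a_{iπ(i)}`. -/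
def det (A : Matrix (Fin n) (Fin n) Rmax) : Rmax :=
  Finset.univ.sup fun π : Equiv.Perm (Fin n) => ∑ i, A i (π i)

/-- Max-plus characteristic polynomial `χ_A(t) = det (A ⊕ t ⊗ I_n)`. -/
def charPoly (A : Matrix (Fin n) (Fin n) Rmax) (t : Rmax) : Rmax :=
  det fun i j => A i j ⊔ (if i = j then t else ⊥)

/-- Max-plus diagonal matrix `diag(d)` defined by a finite vector `d`. -/
def diagM (d : Fin n → ℝ) : Matrix (Fin n) (Fin n) Rmax :=
  fun i j => if i = j then ((d i : ℝ) : Rmax) else ⊥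

/-- `A` is irreducible: `𝒢(A)` is strongly connected. -/
def Irreducible (A : Matrix (Fin n) (Fin n) Rmax) : Prop :=
  ∀ i j : Fin n, ∃ t p, 0 < t ∧ IsWalk A t p ∧ p 0 = i ∧ p t = j

/-- `v` is a critical node of `A` (with `lamA = λ(A)`): it lies on a circuit
of mean weight `λ(A)`. -/
def IsCriticalNode (A : Matrix (Fin n) (Fin n) Rmax) (lamA : ℝ) (v : Fin n) : Prop :=
  ∃ t p, IsCircuit A t p ∧ mean A t p = lamA ∧ ∃ m, m < t ∧ p m = v

/-- `(i,j)` is a critical arc of `A` (with `lamA = λ(A)`). -/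
def IsCriticalArc (A : Matrix (Fin n) (Fin n) Rmax) (lamA : ℝ) (i j : Fin n) : Prop :=
  ∃ t p, IsCircuit A t p ∧ mean A t p = lamA ∧ ∃ m, m < t ∧ p m = i ∧ p (m + 1) = j

/-- A multi-circuit: a collection of pairwise node-disjoint elementary circuits,
each given by its length and its node sequence. -/
def IsMultiCircuit (A : Matrix (Fin n) (Fin n) Rmax) (L : List (ℕ × (ℕ → Fin n))) : Prop :=
  (∀ c ∈ L, IsElemCircuit A c.1 c.2) ∧
  L.Pairwise fun c d => ∀ k, k < c.1 → ∀ l, l < d.1 → c.2 k ≠ d.2 l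

/-- Length of a multi-circuit: the sum of the lengths of its circuits. -/
def mcLength {n : ℕ} (L : List (ℕ × (ℕ → Fin n))) : ℕ := (L.map Prod.fst).sum

/-- Weight of a multi-circuit: the sum of the weights of its circuits. -/
def mcWeight (A : Matrix (Fin n) (Fin n) Rmax) (L : List (ℕ × (ℕ → Fin n))) : Rmax :=
  (L.map fun c => weight A c.1 c.2).sum

/-- The value `w(𝔊) + λ·(n − ℓ(𝔊))` of a multi-circuit `𝔊`. -/
def mcVal (A : Matrix (Fin n) (Fin n) Rmax) (lam : ℝ)
    (L : List (ℕ × (ℕ → Fin n))) : Rmax :=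
  mcWeight A L + ((((n : ℝ) - (mcLength L : ℝ)) * lam : ℝ) : Rmax)

/-- `L` is a `λ`-maximal multi-circuit (λ-MMC): `χ_A(λ) = w(L) + λ·(n − ℓ(L))`. -/
def IsMMC (A : Matrix (Fin n) (Fin n) Rmax) (lam : ℝ) (L : List (ℕ × (ℕ → Fin n))) : Prop :=
  IsMultiCircuit A L ∧ charPoly A ((lam : ℝ) : Rmax) = mcVal A lam L

/-- `v` is the maximum weight of multi-circuits of length `k` in `𝒢(A)`
(`v = ⊥ = ε` if there is no multi-circuit of length `k`). -/
def IsMaxMCWeight (A : Matrix (Fin n) (Fin n) Rmax) (k : ℕ) (v : Rmax) : Prop :=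
  (∀ L, IsMultiCircuit A L → mcLength L = k → mcWeight A L ≤ v) ∧
  (v = ⊥ ∨ ∃ L, IsMultiCircuit A L ∧ mcLength L = k ∧ mcWeight A L = v)

/-- `rs` is a list of the `n` roots of `χ_A`, via the factorization of `χ_A`
into linear factors (the leading coefficient of `χ_A` is `0 = e`). -/
def IsCharRoots (A : Matrix (Fin n) (Fin n) Rmax) (rs : Fin n → Rmax) : Prop :=
  ∀ t, charPoly A t = ∑ i, (t ⊔ rs i)

/-- `lam 1 > lam 2 > ⋯ > lam p` are exactly the finite roots among `rs`,
in descending order. -/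
def IsFiniteRootSeq {n : ℕ} (rs : Fin n → Rmax) (p : ℕ) (lam : ℕ → ℝ) : Prop :=
  (∀ k, 1 ≤ k → k < p → lam (k + 1) < lam k) ∧
  (∀ k, 1 ≤ k → k ≤ p → ∃ i, rs i = ((lam k : ℝ) : Rmax)) ∧
  (∀ i, rs i = ⊥ ∨ ∃ k, 1 ≤ k ∧ k ≤ p ∧ rs i = ((lam k : ℝ) : Rmax))

/-- `G 0, G 1, …, G p` is a maximal multi-circuit sequence (MMCS) of `A`:
`G 0 = ∅` and `G k` is a `λ`-MMC for all `λ` with `λ_{k+1} ≤ λ ≤ λ_k`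
(where `λ_0 = +∞` and `λ_{p+1} = ε`). -/
def IsMMCS (A : Matrix (Fin n) (Fin n) Rmax) (p : ℕ) (lam : ℕ → ℝ)
    (G : ℕ → List (ℕ × (ℕ → Fin n))) : Prop :=
  G 0 = [] ∧
  ∀ k, k ≤ p → ∀ x : ℝ, (k < p → lam (k + 1) ≤ x) → (1 ≤ k → x ≤ lam k) → IsMMC A x (G k)

/-- The set of nodes of a circuit. -/
def circNodes (t : ℕ) (p : ℕ → Fin n) : Finset (Fin n) := (Finset.range t).image p

/-- A group produced by Algorithm 1: its node set `nodes`, its quasi-critical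
circuit `(ct, cp)`, and the index `k = k(s)` with `(ct, cp) ∈ 𝔊_{k(s)}`. -/
structure Grp (n : ℕ) where
  nodes : Finset (Fin n)
  ct : ℕ
  cp : ℕ → Fin n
  k : ℕ

/-- The union of the node sets of a list of groups. -/
def unionNodes (st : List (Grp n)) : Finset (Fin n) :=
  st.foldr (fun g acc => g.nodes ∪ acc) ∅

/-- One step of Algorithm 1, processing one circuit `c = (k, t, p)`;
the groups created so far are kept in reverse creation order. -/
def algStep (st : List (Grp n)) (c : ℕ × ℕ × (ℕ → Fin n)) : List (Grp n) :=
  let S := circNodes c.2.1 c.2.2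
  if (S ∩ unionNodes st).Nonempty then
    match st with
    | [] => []
    | g :: rest => { g with nodes := g.nodes ∪ (S \ unionNodes st) } :: rest
  else
    ⟨S, c.2.1, c.2.2, c.1⟩ :: st

/-- Algorithm 1: process the circuits of `G 1`, then `G 2`, …, then `G p` in
order, and finally add all never-covered nodes to the last created group.
The result is the list of groups `N_1, …, N_r` in creation order. -/
def algPartition (p : ℕ) (G : ℕ → List (ℕ × (ℕ → Fin n))) : List (Grp n) :=
  let items : List (ℕ × ℕ × (ℕ → Fin n)) :=
    (List.range p).foldr (fun k acc => ((G (k + 1)).map fun c => (k + 1, c.1, c.2)) ++ acc) []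
  let st := items.foldl algStep []
  match st with
  | [] => []
  | g :: rest =>
      (({ g with nodes := g.nodes ∪ (Finset.univ \ unionNodes (g :: rest)) } : Grp n)
        :: rest).reverse

/-- `U_s = N_1 ∪ ⋯ ∪ N_s` (`s` counted 1-based, i.e. the first `s` groups). -/
def Useq (Gs : List (Grp n)) (s : ℕ) : Finset (Fin n) := unionNodes (Gs.take s)

/-- The walk `P` (of length `t`) contains the circuit `(ct, cp)` as a
consecutive subpath. -/
def ContainsCircuit (t : ℕ) (P : ℕ → Fin n) (ct : ℕ) (cp : ℕ → Fin n) : Prop :=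
  ∃ m, m + ct ≤ t ∧ ∀ j, j ≤ ct → P (m + j) = cp j

end

end MaxPlus

section Aux

namespace MaxPlus

noncomputable section

variable {n : ℕ}

lemma sum_range_split (f : ℕ → Rmax) (a b : ℕ) :
    ∑ k ∈ Finset.range (a + b), f k
      = (∑ k ∈ Finset.range a, f k) + ∑ k ∈ Finset.range b, f (a + k) := by
  induction b with
  | zero => simp
  | succ b ih =>
      rw [Nat.add_succ, Finset.sum_range_succ, Finset.sum_range_succ, ih, add_assoc]

lemma weight_le_pow (A : Matrix (Fin n) (Fin n) Rmax) :
    ∀ t p, IsWalk A t p → weight A t p ≤ pow A t (p 0) (p t) := by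
  intro t
  induction t with
  | zero => intro p _; simp [weight, pow, one]
  | succ t ih =>
      intro p hw
      have h1 : IsWalk A t p := fun k hk => hw k (hk.trans (Nat.lt_succ_self t))
      have hwt : weight A (t + 1) p = weight A t p + A (p t) (p (t + 1)) := by
        simp [weight, Finset.sum_range_succ]
      have hle : weight A t p + A (p t) (p (t + 1))
          ≤ pow A t (p 0) (p t) + A (p t) (p (t + 1)) :=
        add_le_add_left (ih p h1) _
      have hsup : pow A t (p 0) (p t) + A (p t) (p (t + 1)) ≤ pow A (t + 1) (p 0) (p (t + 1)) := by
        show pow A t (p 0) (p t) + A (p t) (p (t + 1))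
            ≤ Finset.univ.sup fun s => pow A t (p 0) s + A s (p (t + 1))
        exact Finset.le_sup (f := fun s => pow A t (p 0) s + A s (p (t + 1)))
          (Finset.mem_univ (p t))
      rw [hwt]; exact hle.trans hsup

lemma pow_attained (A : Matrix (Fin n) (Fin n) Rmax) :
    ∀ t (i j : Fin n), pow A t i j = ⊥ ∨
      ∃ p, IsWalk A t p ∧ p 0 = i ∧ p t = j ∧ weight A t p = pow A t i j := by
  intro t
  induction t with
  | zero =>
      intro i j
      by_cases h : i = j
      · exact Or.inr ⟨fun _ => i, fun k hk => absurd hk (Nat.not_lt_zero k), rfl, h.symm ▸ rfl,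
          by simp [weight, pow, one, h]⟩
      · exact Or.inl (by simp [pow, one, h])
  | succ t ih =>
      intro i j
      have hne : (Finset.univ : Finset (Fin n)).Nonempty := ⟨i, Finset.mem_univ i⟩
      obtain ⟨s, -, hs⟩ := Finset.exists_mem_eq_sup Finset.univ hne
        (fun s => pow A t i s + A s j)
      have hpow : pow A (t + 1) i j = pow A t i s + A s j := hs
      by_cases hb : pow A t i s + A s j = ⊥
      · exact Or.inl (hpow.trans hb)
      · right
        have h1 : pow A t i s ≠ ⊥ := fun h => hb (by simp [h])
        have h2 : A s j ≠ ⊥ := fun h => hb (by simp [h])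
        obtain ⟨p, hw, hp0, hpt, hwt⟩ := (ih i s).resolve_left h1
        refine ⟨fun k => if k ≤ t then p k else j, ?_, ?_, ?_, ?_⟩
        · intro k hk
          rcases Nat.lt_or_ge k t with hk' | hk'
          · simpa [Nat.le_of_lt hk', Nat.succ_le_of_lt hk'] using hw k hk'
          · have hkt : k = t := by omega
            subst hkt
            simpa [hpt, Nat.not_succ_le_self k] using h2
        · simp [hp0]
        · simp [Nat.not_succ_le_self t]
        · have hstep : weight A (t + 1) (fun k => if k ≤ t then p k else j)
              = weight A t p + A s j := by
            unfold weight
            rw [Finset.sum_range_succ]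
            congr 1
            · refine Finset.sum_congr rfl fun k hk => ?_
              have hk' := Finset.mem_range.1 hk
              simp [Nat.le_of_lt hk', Nat.succ_le_of_lt hk']
            · simp [hpt, Nat.not_succ_le_self t]
          rw [hstep, hwt, hpow]

lemma exists_shorter (A : Matrix (Fin n) (Fin n) Rmax)
    (hnopos : ∀ t p, IsCircuit A t p → weight A t p ≤ (0 : Rmax))
    (t : ℕ) (p : ℕ → Fin n) (hw : IsWalk A t p) (ht : n ≤ t) :
    ∃ t' p', t' < t ∧ IsWalk A t' p' ∧ p' 0 = p 0 ∧ p' t' = p t ∧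
      weight A t p ≤ weight A t' p' := by
  -- pigeonhole among p 0, …, p n
  have hcard : Fintype.card (Fin n) < Fintype.card (Fin (n + 1)) := by simp
  obtain ⟨x, y, hxy, hpxy⟩ := Fintype.exists_ne_map_eq_of_card_lt
    (fun k : Fin (n + 1) => p k) hcard
  -- wlog x < y
  obtain ⟨a, b, hab, hbn, hpp⟩ : ∃ a b : ℕ, a < b ∧ b ≤ n ∧ p b = p a := by
    rcases lt_or_gt_of_ne hxy with h | h
    · exact ⟨x, y, h, Nat.lt_succ_iff.1 y.2, hpxy.symm⟩
    · exact ⟨y, x, h, Nat.lt_succ_iff.1 x.2, hpxy⟩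
  set d := b - a with hd
  have hbd : b = a + d := by omega
  have hdpos : 0 < d := by omega
  set c := t - b with hc
  have htc : t = a + (d + c) := by omega
  set p' : ℕ → Fin n := fun k => if k < a then p k else p (k + d) with hp'
  have hple : ∀ k, k ≤ a → p' k = p k := by
    intro k hk
    rcases Nat.lt_or_ge k a with h | h
    · simp [hp', h]
    · have hka : k = a := by omega
      subst hka
      simp only [hp', lt_irrefl, if_false]
      rw [← hbd, hpp]
  have hpge : ∀ k, a ≤ k → p' k = p (k + d) := by
    intro k hk
    rcases Nat.lt_or_ge k a with h | h
    · omega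
    · simp [hp', not_lt.2 h]
  have harc : ∀ k, (k < a → (A (p' k) (p' (k + 1)) = A (p k) (p (k + 1)))) ∧
      (a ≤ k → A (p' k) (p' (k + 1)) = A (p (k + d)) (p (k + d + 1))) := by
    intro k
    constructor
    · intro h
      rw [hple k (Nat.le_of_lt h), hple (k + 1) h]
    · intro h
      rw [hpge k h, hpge (k + 1) (by omega), show k + 1 + d = k + d + 1 from by omega]
  refine ⟨a + c, p', by omega, ?_, ?_, ?_, ?_⟩
  · intro k hk
    rcases Nat.lt_or_ge k a with h | h
    · rw [(harc k).1 h]; exact hw k (by omega)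
    · rw [(harc k).2 h]; exact hw (k + d) (by omega)
  · exact hple 0 (Nat.zero_le a)
  · rw [hpge (a + c) (by omega)]; congr 1; omega
  -- weight comparison
  · have hcirc : IsCircuit A d (fun k => p (a + k)) := by
      refine ⟨hdpos, fun k hk => ?_, ?_⟩
      · show A (p (a + k)) (p (a + (k + 1))) ≠ ⊥
        rw [show a + (k + 1) = a + k + 1 from by omega]
        exact hw (a + k) (by omega)
      · show p (a + d) = p (a + 0)
        rw [← hbd, hpp]
        simp
    have hcw : weight A d (fun k => p (a + k)) ≤ (0 : Rmax) := hnopos d _ hcirc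
    have hsplit : weight A t p
        = (∑ k ∈ Finset.range a, A (p k) (p (k + 1)))
          + ((∑ k ∈ Finset.range d, A (p (a + k)) (p (a + k + 1)))
            + ∑ k ∈ Finset.range c, A (p (a + (d + k))) (p (a + (d + k) + 1))) := by
      unfold weight
      rw [htc, sum_range_split, sum_range_split]
    have hcirc_eq : weight A d (fun k => p (a + k))
        = ∑ k ∈ Finset.range d, A (p (a + k)) (p (a + k + 1)) := by
      unfold weight
      exact Finset.sum_congr rfl fun k _ => rfl
    have hsplit' : weight A (a + c) p'
        = (∑ k ∈ Finset.range a, A (p k) (p (k + 1)))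
          + ∑ k ∈ Finset.range c, A (p (a + (d + k))) (p (a + (d + k) + 1)) := by
      unfold weight
      rw [sum_range_split]
      congr 1
      · exact Finset.sum_congr rfl fun k hk => (harc k).1 (Finset.mem_range.1 hk)
      · refine Finset.sum_congr rfl fun k _ => ?_
        rw [(harc (a + k)).2 (by omega), show a + k + d = a + (d + k) from by omega]
    rw [hsplit, hsplit', ← hcirc_eq]
    calc (∑ k ∈ Finset.range a, A (p k) (p (k + 1)))
          + (weight A d (fun k => p (a + k))
            + ∑ k ∈ Finset.range c, A (p (a + (d + k))) (p (a + (d + k) + 1)))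
        ≤ (∑ k ∈ Finset.range a, A (p k) (p (k + 1)))
          + ((0 : Rmax) + ∑ k ∈ Finset.range c, A (p (a + (d + k))) (p (a + (d + k) + 1))) :=
          add_le_add_right (add_le_add_left hcw _) _
      _ = _ := by rw [zero_add]

lemma pow_le_starUpTo (A : Matrix (Fin n) (Fin n) Rmax)
    (hnopos : ∀ t p, IsCircuit A t p → weight A t p ≤ (0 : Rmax))
    (i j : Fin n) : ∀ t, pow A t i j ≤ starUpTo A (n - 1) i j := by
  intro t
  induction t using Nat.strong_induction_on with
  | _ t ih =>
    by_cases ht : t ≤ n - 1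
    · have hmem : t ∈ Finset.range (n - 1 + 1) := Finset.mem_range.2 (by omega)
      show pow A t i j ≤ (Finset.range (n - 1 + 1)).sup fun k => pow A k i j
      exact Finset.le_sup (f := fun k => pow A k i j) hmem
    · rcases pow_attained A t i j with h | ⟨p, hw, hp0, hpt, hwt⟩
      · simp [h]
      · have hn : n ≤ t := by omega
        obtain ⟨t', p', hlt, hw', h0, ht', hle⟩ := exists_shorter A hnopos t p hw hn
        calc pow A t i j = weight A t p := hwt.symm
          _ ≤ weight A t' p' := hle
          _ ≤ pow A t' (p' 0) (p' t') := weight_le_pow A t' p' hw'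
          _ = pow A t' i j := by rw [h0, ht', hp0, hpt]
          _ ≤ _ := ih t' hlt

end

end MaxPlus

end Aux

open MaxPlus in
/-- If `𝒢(A)` has no circuit of positive weight, the Kleene star
stabilizes: for every `m ≥ n − 1`,
`I_n ⊕ A ⊕ ⋯ ⊕ A^{⊗m} = I_n ⊕ A ⊕ ⋯ ⊕ A^{⊗(n−1)} =: A*`, and the `(i,j)` entry of
`A*` is the maximum weight over all `i`-`j` paths in `𝒢(A)` of any length
(including the empty path of weight `0` when `i = j`), `ε` if none exists. -/
theorem kleeneStar_stabilizes {n : ℕ} (A : Matrix (Fin n) (Fin n) Rmax)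
    (hnopos : ∀ t p, IsCircuit A t p → weight A t p ≤ (0 : Rmax)) :
    (∀ m, n - 1 ≤ m → starUpTo A m = starUpTo A (n - 1)) ∧
    ∀ i j,
      (∀ t p, IsWalk A t p → p 0 = i → p t = j → weight A t p ≤ starUpTo A (n - 1) i j) ∧
      (starUpTo A (n - 1) i j = ⊥ ∨
        ∃ t p, IsWalk A t p ∧ p 0 = i ∧ p t = j ∧ weight A t p = starUpTo A (n - 1) i j) := by
  constructor
  · intro m hm
    funext i j
    apply le_antisymm
    · show ((Finset.range (m + 1)).sup fun k => pow A k i j) ≤ starUpTo A (n - 1) i j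
      exact Finset.sup_le fun k _ => pow_le_starUpTo A hnopos i j k
    · show ((Finset.range (n - 1 + 1)).sup fun k => pow A k i j)
        ≤ (Finset.range (m + 1)).sup fun k => pow A k i j
      refine Finset.sup_le fun k hk => ?_
      have hk' : k ∈ Finset.range (m + 1) := by
        have := Finset.mem_range.1 hk
        exact Finset.mem_range.2 (by omega)
      exact Finset.le_sup (f := fun k => pow A k i j) hk'
  · intro i j
    constructor
    · intro t p hw hp0 hpt
      calc weight A t p ≤ pow A t (p 0) (p t) := weight_le_pow A t p hw
        _ = pow A t i j := by rw [hp0, hpt]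
        _ ≤ starUpTo A (n - 1) i j := pow_le_starUpTo A hnopos i j t
    · have hne : (Finset.range (n - 1 + 1)).Nonempty := ⟨0, Finset.mem_range.2 (by omega)⟩
      obtain ⟨k0, -, hk0⟩ := Finset.exists_mem_eq_sup (Finset.range (n - 1 + 1)) hne
        (fun k => pow A k i j)
      have hstar : starUpTo A (n - 1) i j = pow A k0 i j := hk0
      rcases pow_attained A k0 i j with h | ⟨p, hw, hp0, hpt, hwt⟩
      · exact Or.inl (hstar.trans h)
      · exact Or.inr ⟨k0, p, hw, hp0, hpt, hwt.trans hstar.symm⟩
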